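/- arXiv:2307.02619 — 2 statements merged into one kernel-verified Lean document; each statement's English description precedes it below -/
import Mathlib

section
/- The following identities hold in ℂ((z^{−1})): (i) the series z − a_0^{(0)} − Σ_{i=1}^{q} Σ_{j=1}^{p} a_0^{(i)} a_0^{(−j)} A^{(1)}_{i−1,j−1}(z) is nonzero and A_{0,0}(z) is its multiplicative inverse, i.e. A_{0,0}(z)·(z − a_0^{(0)} − Σ_{i=1}^{q} Σ_{j=1}^{p} a_0^{(i)} a_0^{(−j)} A^{(1)}_{i−1,j−1}(z)) = 1; (ii) for every j ≥ 1, A_{0,j}(z) = A_{0,0}(z)·Σ_{i=1}^{q} a_0^{(i)} A^{(1)}_{i−1,j−1}(z); (iii) for every i ≥ 1, A_{i,0}(z) = A_{0,0}(z)·Σ_{j=1}^{p} a_0^{(−j)} A^{(1)}_{i−1,j−1}(z); (iv) for all i, j ≥ 1, A_{0,0}(z)·A_{i,j}(z) = A_{i,0}(z)·A_{0,j}(z) + A_{0,0}(z)·A^{(1)}_{i−1,j−1}(z). -/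
open scoped BigOperators
open Finset

noncomputable section

/-- The field `ℂ((z⁻¹))`, realized as Laurent series in the variable `t = z⁻¹`. -/
abbrev LS : Type := LaurentSeries ℂ

/-- The element `z` of `ℂ((z⁻¹))` (i.e. `t⁻¹`). -/
def zLS : LS := HahnSeries.single (-1 : ℤ) (1 : ℂ)

/-- Constant (scalar) Laurent series. -/
def CLS (c : ℂ) : LS := HahnSeries.C c

/-- The generating series `Σ_{n ≥ 0} c n · z^{-n-1}` in `ℂ((z⁻¹))`. -/
def gen (c : ℕ → ℂ) : LS :=
  HahnSeries.single (1 : ℤ) (1 : ℂ) * (HahnSeries.ofPowerSeries ℤ ℂ) (PowerSeries.mk c)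

/-- Weight of a step of displacement `s` starting at height `h`:
`a_h^{(s)}` if `s ≥ 0`, and `a_{h+s}^{(s)}` if `s < 0`.  (Here `a k n = aₙ⁽ᵏ⁾`.) -/
def stepW (a : ℤ → ℤ → ℂ) (h s : ℤ) : ℂ := if 0 ≤ s then a s h else a s (h + s)

/-- Extend a finite step sequence by zero. -/
def ext {n : ℕ} (s : Fin n → ℤ) : ℕ → ℤ := fun t => if h : t < n then s ⟨t, h⟩ else 0

/-- Height after `k` steps, starting at height `i`. -/
def hgt (i : ℤ) (σ : ℕ → ℤ) (k : ℕ) : ℤ := i + ∑ t ∈ Finset.range k, σ t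

/-- Weight of the lattice path of length `n` starting at height `i` with steps `σ`. -/
def wgt (a : ℤ → ℤ → ℂ) (n : ℕ) (i : ℤ) (σ : ℕ → ℤ) : ℂ :=
  ∏ k ∈ Finset.range n, stepW a (hgt i σ k) (σ k)

/-- All admissible step sequences of length `n` (each step in `[-p, q]`). -/
def steps (p q n : ℕ) : Finset (Fin n → ℤ) :=
  Fintype.piFinset fun _ => Finset.Icc (-(p : ℤ)) (q : ℤ)

/-- `A_{[n,i,j]}`: weight polynomial of paths of length `n` from `(0,i)` to `(n,j)`
staying at height `≥ 0`. -/
def Apoly (p q : ℕ) (a : ℤ → ℤ → ℂ) (n : ℕ) (i j : ℤ) : ℂ :=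
  ∑ s ∈ steps p q n,
    if hgt i (ext s) n = j ∧ ∀ k ≤ n, 0 ≤ hgt i (ext s) k then wgt a n i (ext s) else 0

/-- `W_{[n,i,j]}`: weight polynomial of unrestricted paths of length `n` from `(0,i)` to `(n,j)`. -/
def Wpoly (p q : ℕ) (a : ℤ → ℤ → ℂ) (n : ℕ) (i j : ℤ) : ℂ :=
  ∑ s ∈ steps p q n, if hgt i (ext s) n = j then wgt a n i (ext s) else 0

/-- `V_{[n,i,j]}`: weight polynomial of paths of length `n` from `(0,i)` to `(n,j)`
staying at height `≤ -1`. -/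
def Vpoly (p q : ℕ) (a : ℤ → ℤ → ℂ) (n : ℕ) (i j : ℤ) : ℂ :=
  ∑ s ∈ steps p q n,
    if hgt i (ext s) n = j ∧ ∀ k ≤ n, hgt i (ext s) k ≤ -1 then wgt a n i (ext s) else 0

/-- `A_{[ℓ,i,j,N]}`: weight polynomial of paths of length `ℓ` from `(0,i)` to `(ℓ,j)`
with all heights in `{0, …, N-1}`. -/
def Aboxpoly (p q : ℕ) (a : ℤ → ℤ → ℂ) (N ℓ : ℕ) (i j : ℤ) : ℂ :=
  ∑ s ∈ steps p q ℓ,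
    if hgt i (ext s) ℓ = j ∧ ∀ k ≤ ℓ, 0 ≤ hgt i (ext s) k ∧ hgt i (ext s) k ≤ (N : ℤ) - 1
    then wgt a ℓ i (ext s) else 0

/-- The generating series `A_{i,j}(z)`. -/
def Aser (p q : ℕ) (a : ℤ → ℤ → ℂ) (i j : ℤ) : LS := gen fun n => Apoly p q a n i j

/-- The generating series `W_{i,j}(z)`. -/
def Wser (p q : ℕ) (a : ℤ → ℤ → ℂ) (i j : ℤ) : LS := gen fun n => Wpoly p q a n i j

/-- The generating series `V_{i,j}(z)`. -/
def Vser (p q : ℕ) (a : ℤ → ℤ → ℂ) (i j : ℤ) : LS := gen fun n => Vpoly p q a n i j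

/-!
Write `Aser = X · pathSeries`, with power series in `X = z⁻¹`. Removing the first step of a path
gives a linear recursion for `pathSeries a · j` in the starting height; as every step carries a
factor `X`, this recursion has at most one solution. A path from height `i ≥ 1` either stays at
height `≥ 1`, and is then a shifted path from `i - 1` to `j - 1`, or it visits `0`; cutting it at
its first visit and comparing recursions gives
`A_{i,j} = A⁽¹⁾_{i-1,j-1} + firstPassageSeries i · A_{0,j}`.
The case `j = 0` is (iii), and (iv) follows by eliminating `firstPassageSeries i`; splitting off
the first step of the paths from `0` gives (i); and (ii) is (iii) for the time-reversed paths,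
which carry the weights `a (-k)` and exchange the roles of `p` and `q`.
-/

lemma stepW_shift (a : ℤ → ℤ → ℂ) (h s : ℤ) :
    stepW (fun k n => a k (n + 1)) h s = stepW a (h + 1) s := by
  unfold stepW
  split_ifs <;> ring_nf

lemma stepW_reverse (a : ℤ → ℤ → ℂ) (h s : ℤ) :
    stepW (fun k n => a (-k) n) (h + s) (-s) = stepW a h s := by
  unfold stepW
  split_ifs
  · obtain rfl : s = 0 := by omega
    simp
  · simp
  · simp
  · omega

lemma hgt_zero (i : ℤ) (σ : ℕ → ℤ) : hgt i σ 0 = i := by simp [hgt]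

lemma hgt_succ (i : ℤ) (σ : ℕ → ℤ) (k : ℕ) : hgt i σ (k + 1) = hgt i σ k + σ k := by
  simp [hgt, Finset.sum_range_succ, add_assoc]

lemma Apoly_zero (p q : ℕ) (a : ℤ → ℤ → ℂ) (i j : ℤ) :
    Apoly p q a 0 i j = if i = j ∧ 0 ≤ i then 1 else 0 := by
  simp [Apoly, steps, wgt, hgt_zero]

lemma Apoly_eq_zero_of_start_neg (p q : ℕ) (a : ℤ → ℤ → ℂ) (n : ℕ) {i : ℤ} (j : ℤ)
    (hi : i < 0) : Apoly p q a n i j = 0 :=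
  Finset.sum_eq_zero fun s _ => if_neg fun h => by
    have := h.2 0 n.zero_le
    rw [hgt_zero] at this
    omega

lemma Apoly_eq_zero_of_end_neg (p q : ℕ) (a : ℤ → ℤ → ℂ) (n : ℕ) (i : ℤ) {j : ℤ}
    (hj : j < 0) : Apoly p q a n i j = 0 :=
  Finset.sum_eq_zero fun s _ => if_neg fun h => by
    have := h.2 n le_rfl
    omega

lemma steps_succ (p q n : ℕ) :
    steps p q (n + 1) =
      (Icc (-(p : ℤ)) q ×ˢ steps p q n).map (Fin.consEquiv fun _ => ℤ).toEmbedding := by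
  ext s
  rw [Finset.mem_map_equiv]
  simp [steps, Fintype.mem_piFinset, Fin.consEquiv, Fin.forall_fin_succ, Fin.tail]

lemma ext_cons_zero {n : ℕ} (x : ℤ) (t : Fin n → ℤ) : _root_.ext (Fin.cons x t) 0 = x := by
  simp [_root_.ext]

lemma ext_cons_succ {n : ℕ} (x : ℤ) (t : Fin n → ℤ) (k : ℕ) :
    _root_.ext (Fin.cons x t) (k + 1) = _root_.ext t k := by
  unfold _root_.ext
  by_cases h : k < n
  · rw [dif_pos (Nat.succ_lt_succ h), dif_pos h]
    exact Fin.cons_succ (α := fun _ => ℤ) x t ⟨k, h⟩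
  · rw [dif_neg (by omega), dif_neg h]

lemma hgt_cons_succ {n : ℕ} (i x : ℤ) (t : Fin n → ℤ) (k : ℕ) :
    hgt i (_root_.ext (Fin.cons x t)) (k + 1) = hgt (i + x) (_root_.ext t) k := by
  simp only [hgt, Finset.sum_range_succ', ext_cons_succ, ext_cons_zero]
  ring

lemma wgt_cons {n : ℕ} (a : ℤ → ℤ → ℂ) (i x : ℤ) (t : Fin n → ℤ) :
    wgt a (n + 1) i (_root_.ext (Fin.cons x t)) =
      stepW a i x * wgt a n (i + x) (_root_.ext t) := by
  simp only [wgt, Finset.prod_range_succ', hgt_cons_succ, ext_cons_succ, hgt_zero, ext_cons_zero]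
  ring

lemma Apoly_succ (p q : ℕ) (a : ℤ → ℤ → ℂ) (n : ℕ) {i : ℤ} (j : ℤ)
    (hi : 0 ≤ i) :
    Apoly p q a (n + 1) i j =
      ∑ s ∈ Icc (-(p : ℤ)) q, stepW a i s * Apoly p q a n (i + s) j := by
  simp only [Apoly, steps_succ, Finset.sum_map, Finset.sum_product, Finset.mul_sum]
  refine Finset.sum_congr rfl fun x _ => Finset.sum_congr rfl fun t _ => ?_
  have hpath : (∀ k ≤ n + 1, 0 ≤ hgt i (_root_.ext (Fin.cons x t)) k) ↔
      ∀ k ≤ n, 0 ≤ hgt (i + x) (_root_.ext t) k := by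
    refine ⟨fun h k hk => hgt_cons_succ i x t k ▸ h (k + 1) (by omega), fun h k hk => ?_⟩
    cases k with
    | zero => rwa [hgt_zero]
    | succ k => exact hgt_cons_succ i x t k ▸ h k (by omega)
  have hcons : (Fin.consEquiv fun _ => ℤ).toEmbedding (x, t) = Fin.cons x t := rfl
  simp only [hcons, hgt_cons_succ, hpath, wgt_cons, mul_ite, mul_zero]

def revSteps {n : ℕ} (s : Fin n → ℤ) : Fin n → ℤ := fun t => -s t.rev

lemma revSteps_revSteps {n : ℕ} (s : Fin n → ℤ) : revSteps (revSteps s) = s := by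
  funext t
  simp [revSteps]

lemma revSteps_mem_steps {p q n : ℕ} {s : Fin n → ℤ} (hs : s ∈ steps p q n) :
    revSteps s ∈ steps q p n := by
  simp only [steps, Fintype.mem_piFinset, Finset.mem_Icc, revSteps] at hs ⊢
  intro t
  have := hs t.rev
  omega

lemma ext_revSteps {n : ℕ} (s : Fin n → ℤ) {k : ℕ} (hk : k < n) :
    _root_.ext (revSteps s) k = -_root_.ext s (n - 1 - k) := by
  rw [_root_.ext, _root_.ext, dif_pos hk, dif_pos (by omega)]
  exact congrArg (fun t => -s t) (Fin.ext (by simp; omega))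

lemma hgt_revSteps {n : ℕ} (s : Fin n → ℤ) (i j : ℤ) {k : ℕ} (hk : k ≤ n) :
    hgt j (_root_.ext (revSteps s)) k =
      j - hgt i (_root_.ext s) n + hgt i (_root_.ext s) (n - k) := by
  induction k with
  | zero => simp [hgt_zero]
  | succ k ih =>
    rw [hgt_succ, ih (by omega), ext_revSteps s (by omega),
      show n - k = n - (k + 1) + 1 by omega, hgt_succ, show n - 1 - k = n - (k + 1) by omega]
    ring

lemma wgt_revSteps {n : ℕ} (a : ℤ → ℤ → ℂ) (s : Fin n → ℤ) (i : ℤ) :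
    wgt (fun k m => a (-k) m) n (hgt i (_root_.ext s) n) (_root_.ext (revSteps s)) =
      wgt a n i (_root_.ext s) := by
  rw [wgt, wgt,
    ← Finset.prod_range_reflect fun k => stepW a (hgt i (_root_.ext s) k) (_root_.ext s k)]
  refine Finset.prod_congr rfl fun k hk => ?_
  have hk := Finset.mem_range.mp hk
  rw [hgt_revSteps s i _ hk.le, ext_revSteps s hk, sub_self, zero_add,
    show n - k = n - 1 - k + 1 by omega, hgt_succ, stepW_reverse]

lemma Apoly_reverse (p q : ℕ) (a : ℤ → ℤ → ℂ) (n : ℕ) (i j : ℤ) :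
    Apoly p q a n i j = Apoly q p (fun k m => a (-k) m) n j i := by
  refine Finset.sum_nbij' revSteps revSteps (fun s => revSteps_mem_steps)
    (fun s => revSteps_mem_steps) (fun s _ => revSteps_revSteps s)
    (fun s _ => revSteps_revSteps s) fun s _ => ?_
  have hpath : (hgt i (_root_.ext s) n = j ∧ ∀ k ≤ n, 0 ≤ hgt i (_root_.ext s) k) ↔
      (hgt j (_root_.ext (revSteps s)) n = i ∧
        ∀ k ≤ n, 0 ≤ hgt j (_root_.ext (revSteps s)) k) := by
    simp only [hgt_revSteps s i j le_rfl, Nat.sub_self, hgt_zero]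
    refine ⟨fun ⟨hn, h⟩ => ⟨by omega, fun k hk => ?_⟩,
      fun ⟨hn, h⟩ => ⟨by omega, fun k hk => ?_⟩⟩
    · rw [hgt_revSteps s i j hk, hn, sub_self, zero_add]
      exact h _ (Nat.sub_le n k)
    · have := hgt_revSteps s i j (Nat.sub_le n k) ▸ h (n - k) (Nat.sub_le n k)
      rwa [Nat.sub_sub_self hk, show j - hgt i (_root_.ext s) n = 0 by omega, zero_add] at this
  by_cases h : hgt i (_root_.ext s) n = j ∧ ∀ k ≤ n, 0 ≤ hgt i (_root_.ext s) k
  · rw [if_pos h, if_pos (hpath.mp h), ← h.1, wgt_revSteps]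
  · rw [if_neg h, if_neg (mt hpath.mpr h)]

open PowerSeries

theorem PowerSeries.eq_zero_of_forall_eq_X_mul_sum {ι κ R : Type*} [CommSemiring R]
    {D : ι → R⟦X⟧} (s : Finset κ) (w : ι → κ → R⟦X⟧) (σ : ι → κ → ι)
    (h : ∀ i, D i = X * ∑ k ∈ s, w i k * D (σ i k)) : D = 0 := by
  have hdvd : ∀ n i, X ^ n ∣ D i := by
    intro n
    induction n with
    | zero => simp
    | succ n ih =>
      intro i
      rw [h i, pow_succ']
      exact mul_dvd_mul_left X (Finset.dvd_sum fun k _ => dvd_mul_of_dvd_right (ih _) _)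
  funext i
  ext n
  simpa using X_pow_dvd_iff.mp (hdvd (n + 1) i) n n.lt_succ_self

lemma sum_Icc_eq_add_sum_natCast {M : Type*} [AddCommMonoid M] (p q : ℕ) {f : ℤ → M}
    (hf : ∀ s < 0, f s = 0) :
    ∑ s ∈ Icc (-(p : ℤ)) q, f s = f 0 + ∑ i ∈ Icc 1 q, f i := by
  have hnonneg : ∑ s ∈ Icc (-(p : ℤ)) q, f s = ∑ s ∈ Icc (0 : ℤ) q, f s :=
    (Finset.sum_subset (fun s hs => by simp only [Finset.mem_Icc] at hs ⊢; omega)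
      fun s hs hs' => hf s (by simp only [Finset.mem_Icc] at hs hs'; omega)).symm
  have hpos : ∑ i ∈ Icc 1 q, f i = ∑ s ∈ Icc (1 : ℤ) q, f s := by
    refine Finset.sum_nbij' (fun i => (i : ℤ)) Int.toNat ?_ ?_ ?_ ?_ fun _ _ => rfl <;>
      intro x hx <;> simp only [Finset.mem_Icc] at hx ⊢ <;> omega
  have hIoc : Ioc (0 : ℤ) q = Icc (1 : ℤ) q := by
    ext x
    simp only [Finset.mem_Ioc, Finset.mem_Icc]
    omega
  rw [hnonneg, hpos, ← Finset.add_sum_Ioc_eq_sum_Icc (by positivity), hIoc]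

section

variable (p q : ℕ) (a : ℤ → ℤ → ℂ)

def pathSeries (i j : ℤ) : ℂ⟦X⟧ := PowerSeries.mk fun n => Apoly p q a n i j

lemma pathSeries_eq_zero_of_start_neg {i : ℤ} (j : ℤ) (hi : i < 0) :
    pathSeries p q a i j = 0 := by
  ext n
  simp [pathSeries, Apoly_eq_zero_of_start_neg p q a n j hi]

lemma pathSeries_eq_zero_of_end_neg (i : ℤ) {j : ℤ} (hj : j < 0) :
    pathSeries p q a i j = 0 := by
  ext n
  simp [pathSeries, Apoly_eq_zero_of_end_neg p q a n i hj]

lemma pathSeries_reverse (i j : ℤ) :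
    pathSeries p q a i j = pathSeries q p (fun k m => a (-k) m) j i := by
  ext n
  rw [pathSeries, pathSeries, coeff_mk, coeff_mk, Apoly_reverse]

lemma pathSeries_first_step {i : ℤ} (j : ℤ) (hi : 0 ≤ i) :
    pathSeries p q a i j = (if i = j then 1 else 0) +
      X * ∑ s ∈ Icc (-(p : ℤ)) q, C (stepW a i s) * pathSeries p q a (i + s) j := by
  ext n
  cases n with
  | zero => simp [pathSeries, Apoly_zero, hi]
  | succ n => simp [pathSeries, Apoly_succ p q a n j hi, apply_ite (coeff (n + 1)), map_sum]

lemma pathSeries_shift_first_step {i : ℤ} (j : ℤ) (hi : 1 ≤ i) :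
    pathSeries p q (fun k m => a k (m + 1)) (i - 1) j = (if i - 1 = j then 1 else 0) +
      X * ∑ s ∈ Icc (-(p : ℤ)) q,
        C (stepW a i s) * pathSeries p q (fun k m => a k (m + 1)) (i + s - 1) j := by
  rw [pathSeries_first_step _ _ _ j (by omega)]
  simp only [stepW_shift, sub_add_cancel, sub_add_eq_add_sub]

/-- Paths from height `i` up to their first visit to height `0`: the empty path if `i = 0`;
otherwise a path staying at height `≥ 1`, i.e. a shifted path, from `i` to some height `j`,
followed by the step `-j`, of weight `a (-j) 0`. -/
def firstPassageSeries (i : ℤ) : ℂ⟦X⟧ :=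
  (if i = 0 then 1 else 0) + X * ∑ j ∈ Icc 1 p,
    C (a (-(j : ℤ)) 0) * pathSeries p q (fun k m => a k (m + 1)) (i - 1) ((j : ℤ) - 1)

lemma firstPassageSeries_of_neg {i : ℤ} (hi : i < 0) : firstPassageSeries p q a i = 0 := by
  simp [firstPassageSeries, hi.ne,
    pathSeries_eq_zero_of_start_neg _ _ _ _ (by omega : i - 1 < 0)]

lemma firstPassageSeries_zero : firstPassageSeries p q a 0 = 1 := by
  simp [firstPassageSeries,
    pathSeries_eq_zero_of_start_neg _ _ _ _ (by norm_num : (-1 : ℤ) < 0)]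

lemma firstPassageSeries_first_step {i : ℤ} (hi : 1 ≤ i) :
    firstPassageSeries p q a i =
      X * ∑ s ∈ Icc (-(p : ℤ)) q, C (stepW a i s) * firstPassageSeries p q a (i + s) := by
  have hstep_to_zero : ∑ j ∈ Icc 1 p, C (a (-(j : ℤ)) 0) * (if i - 1 = (j : ℤ) - 1 then 1 else 0) =
      ∑ s ∈ Icc (-(p : ℤ)) q, C (stepW a i s) * (if i + s = 0 then 1 else 0) := by
    obtain ⟨m, rfl⟩ : ∃ m : ℕ, i = m := ⟨i.toNat, by omega⟩
    simp only [mul_ite, mul_one, mul_zero, sub_left_inj, Nat.cast_inj, add_eq_zero_iff_eq_neg',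
      Finset.sum_ite_eq, Finset.sum_ite_eq', Finset.mem_Icc]
    rw [show stepW a m (-m) = a (-m) 0 by rw [stepW, if_neg (by omega), add_neg_cancel]]
    exact if_congr (by constructor <;> intro h <;> omega) rfl rfl
  simp only [firstPassageSeries, if_neg (by omega : i ≠ 0), zero_add,
    pathSeries_shift_first_step p q a _ hi, mul_add, Finset.sum_add_distrib, hstep_to_zero,
    Finset.mul_sum]
  congr 1
  rw [Finset.sum_comm]
  exact Finset.sum_congr rfl fun _ _ => Finset.sum_congr rfl fun _ _ => by ring

lemma pathSeries_first_passage (i j : ℤ) :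
    pathSeries p q a i j = pathSeries p q (fun k m => a k (m + 1)) (i - 1) (j - 1) +
      firstPassageSeries p q a i * pathSeries p q a 0 j := by
  suffices h : (fun l => pathSeries p q a l j -
      pathSeries p q (fun k m => a k (m + 1)) (l - 1) (j - 1) -
        firstPassageSeries p q a l * pathSeries p q a 0 j) = 0 by
    have hi := congrFun h i
    rw [Pi.zero_apply] at hi
    linear_combination hi
  -- Both sides satisfy the first-step recursion in the starting height `l ≥ 1`,
  -- and they agree for `l ≤ 0`.
  refine PowerSeries.eq_zero_of_forall_eq_X_mul_sum (Icc (-(p : ℤ)) q)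
    (fun l s => if 0 < l then C (stepW a l s) else 0) (fun l s => l + s) fun i => ?_
  rcases lt_trichotomy i 0 with hi | rfl | hi
  · simp [hi.not_gt, pathSeries_eq_zero_of_start_neg _ _ _ _ hi,
      firstPassageSeries_of_neg _ _ _ hi,
      pathSeries_eq_zero_of_start_neg _ _ _ _ (by omega : i - 1 < 0)]
  · simp [firstPassageSeries_zero,
      pathSeries_eq_zero_of_start_neg _ _ _ _ (by norm_num : (-1 : ℤ) < 0)]
  · simp only [if_pos hi]
    rw [pathSeries_first_step p q a j hi.le, pathSeries_shift_first_step p q a _ hi,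
      firstPassageSeries_first_step p q a hi]
    simp only [sub_left_inj, mul_sub, Finset.sum_sub_distrib, Finset.mul_sum, Finset.sum_mul,
      mul_assoc]
    ring

lemma pathSeries_eq_firstPassageSeries_mul (i : ℤ) :
    pathSeries p q a i 0 = firstPassageSeries p q a i * pathSeries p q a 0 0 := by
  simpa [pathSeries_eq_zero_of_end_neg _ _ _ _ (by norm_num : (-1 : ℤ) < 0)] using
    pathSeries_first_passage p q a i 0

lemma pathSeries_mul_pathSeries (i j : ℤ) :
    pathSeries p q a 0 0 * pathSeries p q a i j = pathSeries p q a i 0 * pathSeries p q a 0 j +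
      pathSeries p q a 0 0 * pathSeries p q (fun k m => a k (m + 1)) (i - 1) (j - 1) := by
  rw [pathSeries_first_passage p q a i j, pathSeries_eq_firstPassageSeries_mul p q a i]
  ring

lemma pathSeries_zero_zero_eq :
    pathSeries p q a 0 0 = 1 + X * (C (a 0 0) +
      ∑ i ∈ Icc 1 q, C (a i 0) * firstPassageSeries p q a i) * pathSeries p q a 0 0 := by
  conv_lhs => rw [pathSeries_first_step p q a 0 le_rfl]
  rw [Finset.sum_congr rfl fun s _ => congrArg (C (stepW a 0 s) * ·)
    (pathSeries_eq_firstPassageSeries_mul p q a (0 + s))]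
  simp only [if_pos, zero_add, ← mul_assoc, ← Finset.sum_mul]
  rw [sum_Icc_eq_add_sum_natCast p q fun s hs => by simp [firstPassageSeries_of_neg _ _ _ hs]]
  simp [stepW, firstPassageSeries_zero]

lemma pathSeries_start_zero {j : ℤ} (hj : 1 ≤ j) :
    pathSeries p q a 0 j = X * pathSeries p q a 0 0 *
      ∑ i ∈ Icc 1 q, C (a i 0) * pathSeries p q (fun k m => a k (m + 1)) (i - 1) (j - 1) := by
  rw [pathSeries_reverse, pathSeries_eq_firstPassageSeries_mul, ← pathSeries_reverse p q a 0 0,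
    firstPassageSeries, if_neg (by omega)]
  simp only [neg_neg, zero_add, pathSeries_reverse p q (fun k m => a k (m + 1))]
  ring

lemma pathSeries_end_zero {i : ℤ} (hi : 1 ≤ i) :
    pathSeries p q a i 0 = X * pathSeries p q a 0 0 *
      ∑ j ∈ Icc 1 p,
        C (a (-(j : ℤ)) 0) * pathSeries p q (fun k m => a k (m + 1)) (i - 1) (j - 1) := by
  rw [pathSeries_eq_firstPassageSeries_mul, firstPassageSeries, if_neg (by omega), zero_add]
  ring

lemma pathSeries_zero_zero_mul_eq_one :
    pathSeries p q a 0 0 * (1 - X * (C (a 0 0) + X * ∑ i ∈ Icc 1 q, ∑ j ∈ Icc 1 p,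
      C (a i 0) * C (a (-(j : ℤ)) 0) *
        pathSeries p q (fun k m => a k (m + 1)) (i - 1) (j - 1))) = 1 := by
  have hfirst : ∑ i ∈ Icc 1 q, C (a i 0) * firstPassageSeries p q a i =
      X * ∑ i ∈ Icc 1 q, ∑ j ∈ Icc 1 p, C (a i 0) * C (a (-(j : ℤ)) 0) *
        pathSeries p q (fun k m => a k (m + 1)) (i - 1) (j - 1) := by
    rw [Finset.mul_sum]
    refine Finset.sum_congr rfl fun i hi => ?_
    rw [firstPassageSeries, if_neg (by simp only [Finset.mem_Icc] at hi; omega), zero_add,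
      Finset.mul_sum, Finset.mul_sum, Finset.mul_sum]
    exact Finset.sum_congr rfl fun _ _ => by ring
  linear_combination pathSeries_zero_zero_eq p q a + X * pathSeries p q a 0 0 * hfirst

end

lemma Aser_eq_ofPowerSeries (p q : ℕ) (a : ℤ → ℤ → ℂ) (i j : ℤ) :
    Aser p q a i j = HahnSeries.ofPowerSeries ℤ ℂ (X * pathSeries p q a i j) := by
  rw [map_mul, HahnSeries.ofPowerSeries_X]
  rfl

lemma CLS_eq_ofPowerSeries (c : ℂ) : CLS c = HahnSeries.ofPowerSeries ℤ ℂ (C c) :=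
  (HahnSeries.ofPowerSeries_C c).symm

lemma ofPowerSeries_X_mul_mul_zLS (f : ℂ⟦X⟧) :
    HahnSeries.ofPowerSeries ℤ ℂ (X * f) * zLS = HahnSeries.ofPowerSeries ℤ ℂ f := by
  rw [map_mul, HahnSeries.ofPowerSeries_X, mul_right_comm, zLS, HahnSeries.single_mul_single]
  simp

lemma ofPowerSeries_X_mul_mul_zLS_sub (f g : ℂ⟦X⟧) :
    HahnSeries.ofPowerSeries ℤ ℂ (X * f) * (zLS - HahnSeries.ofPowerSeries ℤ ℂ g) =
      HahnSeries.ofPowerSeries ℤ ℂ (f * (1 - X * g)) := by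
  rw [mul_sub, ofPowerSeries_X_mul_mul_zLS, ← map_mul, ← map_sub]
  ring_nf

theorem theorem1_relations_general
    (p q : ℕ) (a : ℤ → ℤ → ℂ) :
    (zLS - CLS (a 0 0) -
        ∑ i ∈ Finset.Icc 1 q, ∑ j ∈ Finset.Icc 1 p,
          CLS (a (i : ℤ) 0) * CLS (a (-(j : ℤ)) 0) *
            Aser p q (fun k n => a k (n + 1)) ((i : ℤ) - 1) ((j : ℤ) - 1) ≠ 0 ∧
      Aser p q a 0 0 *
        (zLS - CLS (a 0 0) -
          ∑ i ∈ Finset.Icc 1 q, ∑ j ∈ Finset.Icc 1 p,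
            CLS (a (i : ℤ) 0) * CLS (a (-(j : ℤ)) 0) *
              Aser p q (fun k n => a k (n + 1)) ((i : ℤ) - 1) ((j : ℤ) - 1)) = 1) ∧
    (∀ j : ℤ, 1 ≤ j →
      Aser p q a 0 j =
        Aser p q a 0 0 *
          ∑ i ∈ Finset.Icc 1 q,
            CLS (a (i : ℤ) 0) * Aser p q (fun k n => a k (n + 1)) ((i : ℤ) - 1) (j - 1)) ∧
    (∀ i : ℤ, 1 ≤ i →
      Aser p q a i 0 =
        Aser p q a 0 0 *
          ∑ j ∈ Finset.Icc 1 p,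
            CLS (a (-(j : ℤ)) 0) * Aser p q (fun k n => a k (n + 1)) (i - 1) ((j : ℤ) - 1)) ∧
    (∀ i j : ℤ, 1 ≤ i → 1 ≤ j →
      Aser p q a 0 0 * Aser p q a i j =
        Aser p q a i 0 * Aser p q a 0 j +
          Aser p q a 0 0 * Aser p q (fun k n => a k (n + 1)) (i - 1) (j - 1)) := by
  simp only [Aser_eq_ofPowerSeries, CLS_eq_ofPowerSeries,
    ← map_mul (HahnSeries.ofPowerSeries ℤ ℂ), ← map_sum (HahnSeries.ofPowerSeries ℤ ℂ),
    ← map_add (HahnSeries.ofPowerSeries ℤ ℂ), sub_sub, mul_left_comm _ X, ← Finset.mul_sum,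
    HahnSeries.ofPowerSeries_injective.eq_iff]
  refine ⟨?_, fun j hj => ?_, fun i hi => ?_, fun i j _ _ => ?_⟩
  · have h := congrArg (HahnSeries.ofPowerSeries ℤ ℂ) (pathSeries_zero_zero_mul_eq_one p q a)
    rw [← ofPowerSeries_X_mul_mul_zLS_sub, map_one] at h
    exact ⟨right_ne_zero_of_mul_eq_one h, h⟩
  · rw [pathSeries_start_zero p q a hj]
  · rw [pathSeries_end_zero p q a hi]
  · linear_combination X * X * pathSeries_mul_pathSeries p q a i j

/-- **Theorem 2.1** (relations between `A_{i,j}(z)` and the shifted series `A⁽¹⁾_{i,j}(z)`).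
Here `a k n` denotes `aₙ⁽ᵏ⁾`, and the shifted data is `a' k n = a k (n+1)`. -/
theorem theorem1_relations
    (p q : ℕ) (hp : 1 ≤ p) (hq : 1 ≤ q) (a : ℤ → ℤ → ℂ) :
    (zLS - CLS (a 0 0) -
        ∑ i ∈ Finset.Icc 1 q, ∑ j ∈ Finset.Icc 1 p,
          CLS (a (i : ℤ) 0) * CLS (a (-(j : ℤ)) 0) *
            Aser p q (fun k n => a k (n + 1)) ((i : ℤ) - 1) ((j : ℤ) - 1) ≠ 0 ∧
      Aser p q a 0 0 *
        (zLS - CLS (a 0 0) -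
          ∑ i ∈ Finset.Icc 1 q, ∑ j ∈ Finset.Icc 1 p,
            CLS (a (i : ℤ) 0) * CLS (a (-(j : ℤ)) 0) *
              Aser p q (fun k n => a k (n + 1)) ((i : ℤ) - 1) ((j : ℤ) - 1)) = 1) ∧
    (∀ j : ℤ, 1 ≤ j →
      Aser p q a 0 j =
        Aser p q a 0 0 *
          ∑ i ∈ Finset.Icc 1 q,
            CLS (a (i : ℤ) 0) * Aser p q (fun k n => a k (n + 1)) ((i : ℤ) - 1) (j - 1)) ∧
    (∀ i : ℤ, 1 ≤ i →
      Aser p q a i 0 =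
        Aser p q a 0 0 *
          ∑ j ∈ Finset.Icc 1 p,
            CLS (a (-(j : ℤ)) 0) * Aser p q (fun k n => a k (n + 1)) (i - 1) ((j : ℤ) - 1)) ∧
    (∀ i j : ℤ, 1 ≤ i → 1 ≤ j →
      Aser p q a 0 0 * Aser p q a i j =
        Aser p q a i 0 * Aser p q a 0 j +
          Aser p q a 0 0 * Aser p q (fun k n => a k (n + 1)) (i - 1) (j - 1)) :=
  theorem1_relations_general p q a
end
end

section
/- The resolvent series of H and of H^{[1]} satisfy the following identities in ℂ((z^{−1})): (i) φ_{0,0}(z)·(z − a_0^{(0)} − Σ_{i=1}^{q} Σ_{j=1}^{p} a_0^{(i)} a_0^{(−j)} φ^{(1)}_{i−1,j−1}(z)) = 1; (ii) for every j ≥ 1, φ_{0,j}(z) = φ_{0,0}(z)·Σ_{i=1}^{q} a_0^{(i)} φ^{(1)}_{i−1,j−1}(z); (iii) for every i ≥ 1, φ_{i,0}(z) = φ_{0,0}(z)·Σ_{j=1}^{p} a_0^{(−j)} φ^{(1)}_{i−1,j−1}(z); (iv) for all i, j ≥ 1, φ_{0,0}(z)·φ_{i,j}(z) = φ_{i,0}(z)·φ_{0,j}(z)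 + φ_{0,0}(z)·φ^{(1)}_{i−1,j−1}(z). -/
open scoped BigOperators
open Finset

noncomputable section

/-- The one-sided banded matrix `H`: `h_{i,j} = a_{min(i,j)}^{(j-i)}` when `-p ≤ j-i ≤ q`. -/
def Hmat (p q : ℕ) (a : ℤ → ℤ → ℂ) (i j : ℕ) : ℂ :=
  if -(p : ℤ) ≤ (j : ℤ) - (i : ℤ) ∧ (j : ℤ) - (i : ℤ) ≤ (q : ℤ) then
    a ((j : ℤ) - (i : ℤ)) (min (i : ℤ) (j : ℤ)) else 0

/-- Entrywise power of a one-sided matrix whose rows are supported on `[0, i + B]`: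
`(M^n)_{i,j}`. -/
def onePow (M : ℕ → ℕ → ℂ) (B : ℕ) : ℕ → ℕ → ℕ → ℂ
  | 0, i, j => if i = j then 1 else 0
  | n + 1, i, j => ∑ r ∈ Finset.range (i + B + 1), M i r * onePow M B n r j

/-- `φ_{i,j}(z)`: resolvent series of the one-sided banded matrix `H`. -/
def phiSer (p q : ℕ) (a : ℤ → ℤ → ℂ) (i j : ℕ) : LS :=
  gen fun n => onePow (Hmat p q a) q n i j

/-- `φ⁽¹⁾_{i,j}(z)`: resolvent series of `H^{[1]}` (delete first row and column of `H`). -/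
def phiSer1 (p q : ℕ) (a : ℤ → ℤ → ℂ) (i j : ℕ) : LS :=
  gen fun n => onePow (fun i' j' => Hmat p q a (i' + 1) (j' + 1)) q n i j

/-!
`(H^n)_{i,j}` is the total weight of the `n`-step paths from `i` to `j` in the graph of `H`.
Splitting such a path at its last visit to `0` (when `j ≥ 1`) or at its first visit to `0`
(when `i ≥ 1`) leaves a path avoiding `0`, i.e. a path of `H^{[1]}`, and a path of `H`
from or to `0`; on generating functions these splittings become (ii)–(iv). Expanding the
first step of a path from `0` gives `z φ_{0,0} = 1 + Σ_r h_{0,r} φ_{r,0}`, and (iii) turns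
this into (i). Since `onePow` only ever sees the entries `h_{i,r}` with `r ≤ i + q`, and
deleting the first row and column respects this truncation, the splittings hold for an
arbitrary matrix `M`.
-/

theorem gen_mul_gen (c d : ℕ → ℂ) :
    gen c * gen d = gen fun n => ∑ k ∈ range n, c k * d (n - 1 - k) := by
  have h : PowerSeries.mk (fun n => ∑ k ∈ range n, c k * d (n - 1 - k)) =
      PowerSeries.X * (PowerSeries.mk c * PowerSeries.mk d) := by
    ext (_ | n)
    · simp
    · rw [PowerSeries.coeff_mk, PowerSeries.coeff_succ_X_mul, PowerSeries.coeff_mul,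
        Nat.sum_antidiagonal_eq_sum_range_succ_mk]
      simp
  simp only [gen, h, map_mul, HahnSeries.ofPowerSeries_X]
  ring

theorem CLS_mul_gen (x : ℂ) (c : ℕ → ℂ) : CLS x * gen c = gen fun n => x * c n := by
  have h : PowerSeries.mk (fun n => x * c n) = PowerSeries.C x * PowerSeries.mk c := by
    ext n
    simp [PowerSeries.coeff_C_mul]
  simp only [CLS, gen, h, map_mul, HahnSeries.ofPowerSeries_C]
  ring

theorem zLS_mul_gen (c : ℕ → ℂ) : zLS * gen c = CLS (c 0) + gen fun n => c (n + 1) := by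
  have h : PowerSeries.mk c =
      PowerSeries.C (c 0) + PowerSeries.X * PowerSeries.mk (c ∘ (· + 1)) := by
    ext (_ | n) <;> simp [PowerSeries.coeff_succ_X_mul]
  have hz : zLS * HahnSeries.single 1 1 = 1 := by
    rw [zLS, HahnSeries.single_mul_single, neg_add_cancel, one_mul, HahnSeries.single_zero_one]
  rw [gen, ← mul_assoc, hz, one_mul, h, map_add, map_mul, HahnSeries.ofPowerSeries_X,
    HahnSeries.ofPowerSeries_C, CLS, gen]
  rfl

theorem gen_sum {ι : Type*} (s : Finset ι) (c : ι → ℕ → ℂ) :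
    ∑ x ∈ s, gen (c x) = gen fun n => ∑ x ∈ s, c x n := by
  have h : PowerSeries.mk (fun n => ∑ x ∈ s, c x n) = ∑ x ∈ s, PowerSeries.mk (c x) := by
    ext n
    simp
  rw [gen, h, map_sum, mul_sum]
  rfl

theorem gen_add (c d : ℕ → ℂ) : gen c + gen d = gen fun n => c n + d n := by
  have h : PowerSeries.mk (fun n => c n + d n) = PowerSeries.mk c + PowerSeries.mk d := by
    ext n
    simp
  rw [gen, gen, gen, h, map_add, mul_add]

theorem CLS_one : CLS 1 = 1 := map_one HahnSeries.C

theorem gen_zero : gen (fun _ => 0) = 0 := by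
  have h : PowerSeries.mk (fun _ => (0 : ℂ)) = 0 := by
    ext n
    simp
  rw [gen, h, map_zero, mul_zero]

def corner (M : ℕ → ℕ → ℂ) (i j : ℕ) : ℂ := M (i + 1) (j + 1)

section OnePow

variable (M : ℕ → ℕ → ℂ) (B : ℕ)

theorem onePow_add_one_zero {L : ℕ} (hM : ∀ s, L ≤ s → M (s + 1) 0 = 0) (n i : ℕ) :
    onePow M B n (i + 1) 0 =
      ∑ k ∈ range n, (∑ s ∈ range L, M (s + 1) 0 * onePow (corner M) B k i s) *
        onePow M B (n - 1 - k) 0 0 := by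
  induction n generalizing i with
  | zero => simp [onePow]
  | succ n ih =>
    have exit : ∑ s ∈ range L, M (s + 1) 0 * onePow (corner M) B 0 i s = M (i + 1) 0 := by
      simp only [onePow, mul_ite, mul_one, mul_zero, sum_ite_eq, mem_range]
      split_ifs with h
      · rfl
      · exact (hM i (not_lt.mp h)).symm
    have step : ∀ k, ∑ r ∈ range (i + B + 1), M (i + 1) (r + 1) *
          ∑ s ∈ range L, M (s + 1) 0 * onePow (corner M) B k r s =
        ∑ s ∈ range L, M (s + 1) 0 * onePow (corner M) B (k + 1) i s := by
      intro k
      simp only [onePow, corner, mul_sum]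
      rw [sum_comm]
      exact sum_congr rfl fun _ _ => sum_congr rfl fun _ _ => by ring
    rw [onePow, show i + 1 + B + 1 = i + B + 1 + 1 by ring, sum_range_succ' _ (i + B + 1),
      sum_range_succ' _ n, exit, Nat.add_sub_cancel, Nat.sub_zero]
    simp only [ih, ← step, mul_sum, sum_mul, mul_assoc]
    rw [sum_comm]
    congr 1
    refine sum_congr rfl fun k _ => ?_
    rw [show n - (k + 1) = n - 1 - k by omega]

theorem onePow_add_one_right (j n i : ℕ) :
    onePow M B n i (j + 1) = ∑ k ∈ range n, onePow M B k i 0 *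
        ∑ r ∈ range B, M 0 (r + 1) * onePow (corner M) B (n - 1 - k) r j +
      if i = 0 then 0 else onePow (corner M) B n (i - 1) j := by
  induction n generalizing i with
  | zero => cases i <;> simp [onePow]
  | succ n ih =>
    have entry : ∑ r ∈ range (i + B + 1),
          M i r * (if r = 0 then 0 else onePow (corner M) B n (r - 1) j) =
        onePow M B 0 i 0 * ∑ r ∈ range B, M 0 (r + 1) * onePow (corner M) B n r j +
          if i = 0 then 0 else onePow (corner M) B (n + 1) (i - 1) j := by
      rw [sum_range_succ']
      rcases i with _ | i
      · simp [onePow]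
      · simp [onePow, corner, add_right_comm]
    rw [onePow]
    simp only [ih, mul_add, sum_add_distrib, entry]
    rw [sum_range_succ' _ n, Nat.add_sub_cancel, Nat.sub_zero, ← add_assoc]
    congr 2
    simp only [onePow, mul_sum, sum_mul, mul_assoc]
    rw [sum_comm]
    refine sum_congr rfl fun k _ => ?_
    rw [show n - (k + 1) = n - 1 - k by omega]
    exact sum_comm

end OnePow

def resolventSeries (M : ℕ → ℕ → ℂ) (B i j : ℕ) : LS := gen fun n => onePow M B n i j

section Resolvent

variable (M : ℕ → ℕ → ℂ) (B : ℕ)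

theorem zLS_mul_resolventSeries (i j : ℕ) :
    zLS * resolventSeries M B i j =
      CLS (if i = j then 1 else 0) +
        ∑ r ∈ range (i + B + 1), CLS (M i r) * resolventSeries M B r j := by
  simp only [resolventSeries, zLS_mul_gen, CLS_mul_gen, gen_sum]
  rfl

theorem resolventSeries_add_one_zero {L : ℕ} (hM : ∀ s, L ≤ s → M (s + 1) 0 = 0) (i : ℕ) :
    resolventSeries M B (i + 1) 0 =
      (∑ s ∈ range L, CLS (M (s + 1) 0) * resolventSeries (corner M) B i s) *
        resolventSeries M B 0 0 := by
  simp only [resolventSeries, CLS_mul_gen, gen_sum, gen_mul_gen, onePow_add_one_zero M B hM]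

theorem resolventSeries_add_one_right (i j : ℕ) :
    resolventSeries M B i (j + 1) =
      resolventSeries M B i 0 *
          ∑ r ∈ range B, CLS (M 0 (r + 1)) * resolventSeries (corner M) B r j +
        if i = 0 then 0 else resolventSeries (corner M) B (i - 1) j := by
  have h : (if i = 0 then 0 else resolventSeries (corner M) B (i - 1) j) =
      gen fun n => if i = 0 then 0 else onePow (corner M) B n (i - 1) j := by
    split_ifs
    · exact gen_zero.symm
    · rfl
  rw [h]
  simp only [resolventSeries, CLS_mul_gen, gen_sum, gen_mul_gen, gen_add,
    onePow_add_one_right M B j]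

theorem resolventSeries_zero_zero_mul {L : ℕ} (hM : ∀ s, L ≤ s → M (s + 1) 0 = 0) :
    resolventSeries M B 0 0 * (zLS - CLS (M 0 0) - ∑ r ∈ range B, ∑ s ∈ range L,
      CLS (M 0 (r + 1)) * CLS (M (s + 1) 0) * resolventSeries (corner M) B r s) = 1 := by
  have row := zLS_mul_resolventSeries M B 0 0
  have loops : ∑ r ∈ range B, CLS (M 0 (r + 1)) * resolventSeries M B (r + 1) 0 =
      (∑ r ∈ range B, ∑ s ∈ range L,
        CLS (M 0 (r + 1)) * CLS (M (s + 1) 0) * resolventSeries (corner M) B r s) *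
          resolventSeries M B 0 0 := by
    simp only [resolventSeries_add_one_zero M B hM, sum_mul, mul_sum]
    exact sum_congr rfl fun r _ => sum_congr rfl fun s _ => by ring
  rw [if_pos rfl, CLS_one, zero_add, sum_range_succ', loops] at row
  linear_combination row

end Resolvent

theorem sum_Icc_one_eq_sum_range {M : Type*} [AddCommMonoid M] (f : ℕ → M) (n : ℕ) :
    ∑ i ∈ Icc 1 n, f i = ∑ r ∈ range n, f (r + 1) := by
  rw [← Ico_add_one_right_eq_Icc, sum_Ico_eq_sum_range]
  simp [add_comm]

section Hmat

variable (p q : ℕ) (a : ℤ → ℤ → ℂ)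

theorem Hmat_zero_of_le {r : ℕ} (hr : r ≤ q) : Hmat p q a 0 r = a r 0 := by
  rw [Hmat, if_pos ⟨by omega, by omega⟩]
  congr 1

theorem Hmat_add_one_zero_of_lt {s : ℕ} (hs : s < p) :
    Hmat p q a (s + 1) 0 = a (-(s + 1 : ℕ)) 0 := by
  rw [Hmat, if_pos ⟨by omega, by omega⟩]
  congr 1

theorem Hmat_add_one_zero_of_le {s : ℕ} (hs : p ≤ s) : Hmat p q a (s + 1) 0 = 0 := by
  rw [Hmat, if_neg (by omega)]

theorem phiSer_eq_resolventSeries : phiSer p q a = resolventSeries (Hmat p q a) q := rfl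

theorem phiSer1_eq_resolventSeries : phiSer1 p q a = resolventSeries (corner (Hmat p q a)) q := rfl

theorem sum_firstRow_mul (j : ℕ) :
    ∑ i ∈ Icc 1 q, CLS (a (i : ℤ) 0) * phiSer1 p q a (i - 1) j =
      ∑ r ∈ range q, CLS (Hmat p q a 0 (r + 1)) * phiSer1 p q a r j := by
  rw [sum_Icc_one_eq_sum_range]
  refine sum_congr rfl fun r hr => ?_
  rw [Hmat_zero_of_le p q a (by simp at hr; omega), Nat.add_sub_cancel]

theorem sum_firstCol_mul (i : ℕ) :
    ∑ j ∈ Icc 1 p, CLS (a (-(j : ℤ)) 0) * phiSer1 p q a i (j - 1) =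
      ∑ s ∈ range p, CLS (Hmat p q a (s + 1) 0) * phiSer1 p q a i s := by
  rw [sum_Icc_one_eq_sum_range]
  refine sum_congr rfl fun s hs => ?_
  rw [Hmat_add_one_zero_of_lt p q a (by simpa using hs), Nat.add_sub_cancel]

theorem sum_firstRow_firstCol_mul :
    ∑ i ∈ Icc 1 q, ∑ j ∈ Icc 1 p,
        CLS (a (i : ℤ) 0) * CLS (a (-(j : ℤ)) 0) * phiSer1 p q a (i - 1) (j - 1) =
      ∑ r ∈ range q, ∑ s ∈ range p,
        CLS (Hmat p q a 0 (r + 1)) * CLS (Hmat p q a (s + 1) 0) * phiSer1 p q a r s := by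
  rw [sum_Icc_one_eq_sum_range]
  refine sum_congr rfl fun r hr => ?_
  rw [sum_Icc_one_eq_sum_range]
  refine sum_congr rfl fun s hs => ?_
  rw [Hmat_zero_of_le p q a (by simp at hr; omega),
    Hmat_add_one_zero_of_lt p q a (by simpa using hs), Nat.add_sub_cancel, Nat.add_sub_cancel]

end Hmat

theorem theorem3_resolvent_relations_general
    (p q : ℕ) (a : ℤ → ℤ → ℂ) :
    (phiSer p q a 0 0 *
        (zLS - CLS (a 0 0) -
          ∑ i ∈ Finset.Icc 1 q, ∑ j ∈ Finset.Icc 1 p,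
            CLS (a (i : ℤ) 0) * CLS (a (-(j : ℤ)) 0) * phiSer1 p q a (i - 1) (j - 1)) = 1) ∧
    (∀ j : ℕ, 1 ≤ j →
      phiSer p q a 0 j =
        phiSer p q a 0 0 *
          ∑ i ∈ Finset.Icc 1 q, CLS (a (i : ℤ) 0) * phiSer1 p q a (i - 1) (j - 1)) ∧
    (∀ i : ℕ, 1 ≤ i →
      phiSer p q a i 0 =
        phiSer p q a 0 0 *
          ∑ j ∈ Finset.Icc 1 p, CLS (a (-(j : ℤ)) 0) * phiSer1 p q a (i - 1) (j - 1)) ∧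
    (∀ i j : ℕ, 1 ≤ i → 1 ≤ j →
      phiSer p q a 0 0 * phiSer p q a i j =
        phiSer p q a i 0 * phiSer p q a 0 j +
          phiSer p q a 0 0 * phiSer1 p q a (i - 1) (j - 1)) := by
  have hcol : ∀ s, p ≤ s → Hmat p q a (s + 1) 0 = 0 := fun _ => Hmat_add_one_zero_of_le p q a
  refine ⟨?_, fun j hj => ?_, fun i hi => ?_, fun i j hi hj => ?_⟩
  · have h00 : Hmat p q a 0 0 = a 0 0 := Hmat_zero_of_le p q a q.zero_le
    rw [sum_firstRow_firstCol_mul, ← h00]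
    exact resolventSeries_zero_zero_mul (Hmat p q a) q hcol
  · obtain ⟨j, rfl⟩ := Nat.exists_eq_add_of_le' hj
    rw [Nat.add_sub_cancel, sum_firstRow_mul, phiSer_eq_resolventSeries,
      phiSer1_eq_resolventSeries, resolventSeries_add_one_right, if_pos rfl, add_zero]
  · obtain ⟨i, rfl⟩ := Nat.exists_eq_add_of_le' hi
    rw [Nat.add_sub_cancel, sum_firstCol_mul, phiSer_eq_resolventSeries,
      phiSer1_eq_resolventSeries, resolventSeries_add_one_zero (Hmat p q a) q hcol, mul_comm]
  · obtain ⟨i, rfl⟩ := Nat.exists_eq_add_of_le' hi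
    obtain ⟨j, rfl⟩ := Nat.exists_eq_add_of_le' hj
    rw [phiSer_eq_resolventSeries, phiSer1_eq_resolventSeries, resolventSeries_add_one_right,
      resolventSeries_add_one_right, if_pos rfl, if_neg i.succ_ne_zero, Nat.add_sub_cancel,
      Nat.add_sub_cancel]
    ring

/-- **Theorem 4.2**: relations between the resolvent series of `H` and of `H^{[1]}`. -/
theorem theorem3_resolvent_relations
    (p q : ℕ) (hp : 1 ≤ p) (hq : 1 ≤ q) (a : ℤ → ℤ → ℂ) :
    (phiSer p q a 0 0 *
        (zLS - CLS (a 0 0) -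
          ∑ i ∈ Finset.Icc 1 q, ∑ j ∈ Finset.Icc 1 p,
            CLS (a (i : ℤ) 0) * CLS (a (-(j : ℤ)) 0) * phiSer1 p q a (i - 1) (j - 1)) = 1) ∧
    (∀ j : ℕ, 1 ≤ j →
      phiSer p q a 0 j =
        phiSer p q a 0 0 *
          ∑ i ∈ Finset.Icc 1 q, CLS (a (i : ℤ) 0) * phiSer1 p q a (i - 1) (j - 1)) ∧
    (∀ i : ℕ, 1 ≤ i →
      phiSer p q a i 0 =
        phiSer p q a 0 0 *
          ∑ j ∈ Finset.Icc 1 p, CLS (a (-(j : ℤ)) 0) * phiSer1 p q a (i - 1) (j - 1)) ∧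
    (∀ i j : ℕ, 1 ≤ i → 1 ≤ j →
      phiSer p q a 0 0 * phiSer p q a i j =
        phiSer p q a i 0 * phiSer p q a 0 j +
          phiSer p q a 0 0 * phiSer1 p q a (i - 1) (j - 1)) :=
  theorem3_resolvent_relations_general p q a
end
end
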